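/- There exist constants c > 0 and C > 0 such that for every real k ≥ 1, every δ with 0 < δ ≤ 1, and every s ≥ 0, one has g_{k,δ}(s) ≥ c·s − C. -/

import Mathlib

open Real intervalIntegral

/-- Truncation `T_k(z) = max(0, min(k, z))`. -/
noncomputable def Tk (k z : ℝ) : ℝ := max 0 (min k z)

/-- Regularized entropy density
`g_{k,δ}(s) = ∫₀ˢ (∫₁ʸ dz / (T_k(z) + δ)) dy`. -/
noncomputable def gkd (k δ s : ℝ) : ℝ :=
  ∫ y in (0:ℝ)..s, ∫ z in (1:ℝ)..y, 1 / (Tk k z + δ)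

/-!
The function `g = g_{k,δ}` is convex, with derivative `g' y = ∫₁ʸ dz / (T_k z + δ)`, so it lies
above its tangent at `2`. The integrand lies in `[1/3, 1]` on `[1, 2]`, so the slope `g' 2` lies in
`[1/3, 1]`; and the integrand is at most `1/z` on `(0, 1]`, so `g' y ≥ log y` there; with
`g' ≥ g' 1 = 0` on `[1, 2]` this gives `g 2 ≥ ∫₀¹ log y dy = -1`. Hence `g s ≥ -1 + (s - 2) g' 2 ≥ s/3 - 3`.
-/

open Set

theorem Monotone.sub_mul_le_intervalIntegral {h : ℝ → ℝ} (hh : Monotone h) (a s : ℝ) :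
    (s - a) * h a ≤ ∫ x in a..s, h x := by
  rcases le_total a s with has | hsa
  · calc (s - a) * h a = ∫ _ in a..s, h a := by simp
      _ ≤ ∫ x in a..s, h x :=
        integral_mono_on has intervalIntegrable_const hh.intervalIntegrable fun x hx => hh hx.1
  · have : ∫ x in s..a, h x ≤ (a - s) * h a :=
      calc ∫ x in s..a, h x ≤ ∫ _ in s..a, h a :=
            integral_mono_on hsa hh.intervalIntegrable intervalIntegrable_const fun x hx => hh hx.2
        _ = (a - s) * h a := by simp
    rw [integral_symm]
    linarith

section Truncation

variable {k z : ℝ}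

theorem Tk_nonneg : 0 ≤ Tk k z := le_max_left _ _

theorem Tk_le_self (hz : 0 ≤ z) : Tk k z ≤ z := max_le hz (min_le_right _ _)

theorem Tk_eq_self (hz : 0 ≤ z) (hzk : z ≤ k) : Tk k z = z := by
  rw [Tk, min_eq_right hzk, max_eq_right hz]

theorem one_le_Tk (hk : 1 ≤ k) (hz : 1 ≤ z) : 1 ≤ Tk k z := le_max_of_le_right (le_min hk hz)

theorem continuous_Tk (k : ℝ) : Continuous (Tk k) := by
  unfold Tk
  fun_prop

end Truncation

noncomputable def gkdDeriv (k δ y : ℝ) : ℝ := ∫ z in (1:ℝ)..y, 1 / (Tk k z + δ)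

section EntropyDensity

variable {k δ : ℝ}

theorem gkd_eq_integral_gkdDeriv (s : ℝ) : gkd k δ s = ∫ y in (0:ℝ)..s, gkdDeriv k δ y := rfl

theorem gkdDeriv_one : gkdDeriv k δ 1 = 0 := integral_same

theorem intervalIntegrable_one_div_Tk_add (hδ : 0 < δ) (a b : ℝ) :
    IntervalIntegrable (fun z => 1 / (Tk k z + δ)) MeasureTheory.volume a b :=
  (continuous_const.div ((continuous_Tk k).add continuous_const) fun _ =>
    (add_pos_of_nonneg_of_pos Tk_nonneg hδ).ne').intervalIntegrable a b

theorem monotone_gkdDeriv (hδ : 0 < δ) : Monotone (gkdDeriv k δ) := by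
  intro a b hab
  have hint := intervalIntegrable_one_div_Tk_add (k := k) hδ
  have hdiff : gkdDeriv k δ b - gkdDeriv k δ a = ∫ z in a..b, 1 / (Tk k z + δ) :=
    integral_interval_sub_left (hint 1 b) (hint 1 a)
  have hnonneg : 0 ≤ ∫ z in a..b, 1 / (Tk k z + δ) :=
    integral_nonneg hab fun z _ => one_div_nonneg.mpr (add_pos_of_nonneg_of_pos Tk_nonneg hδ).le
  linarith

theorem gkd_add_sub_mul_le (hδ : 0 < δ) (a s : ℝ) :
    gkd k δ a + (s - a) * gkdDeriv k δ a ≤ gkd k δ s := by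
  have hmono := monotone_gkdDeriv (k := k) hδ
  rw [gkd_eq_integral_gkdDeriv, gkd_eq_integral_gkdDeriv,
    ← integral_add_adjacent_intervals (a := 0) (b := a) (c := s) hmono.intervalIntegrable hmono.intervalIntegrable]
  linarith [hmono.sub_mul_le_intervalIntegral a s]

theorem log_le_gkdDeriv (hk : 1 ≤ k) (hδ : 0 < δ) {y : ℝ} (hy : 0 < y) (hy1 : y ≤ 1) :
    log y ≤ gkdDeriv k δ y := by
  have hzero : (0 : ℝ) ∉ uIcc y 1 := by
    rw [uIcc_of_le hy1]
    exact fun h => hy.not_ge h.1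
  have hle : ∫ z in y..1, 1 / (Tk k z + δ) ≤ ∫ z in y..1, 1 / z :=
    integral_mono_on hy1 (intervalIntegrable_one_div_Tk_add hδ y 1)
      (intervalIntegrable_one_div (fun z hz => fun h => hzero (h ▸ hz)) continuousOn_id)
      fun z hz => by
        have hz0 : 0 < z := hy.trans_le hz.1
        rw [Tk_eq_self hz0.le (hz.2.trans hk)]
        gcongr
        linarith
  rw [integral_one_div hzero, one_div, log_inv] at hle
  rw [gkdDeriv, integral_symm]
  linarith

theorem gkdDeriv_two_mem_Icc (hk : 1 ≤ k) (hδ : 0 < δ) (hδ1 : δ ≤ 1) :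
    gkdDeriv k δ 2 ∈ Icc (1 / 3) 1 := by
  have hint := intervalIntegrable_one_div_Tk_add (k := k) hδ 1 2
  have hbounds : ∀ z ∈ Icc (1 : ℝ) 2, 1 / 3 ≤ 1 / (Tk k z + δ) ∧ 1 / (Tk k z + δ) ≤ 1 := by
    intro z hz
    have h1 := one_le_Tk hk hz.1
    have h2 := Tk_le_self (k := k) (zero_le_one.trans hz.1)
    constructor
    · rw [div_le_div_iff₀ (by norm_num) (by linarith)]
      linarith [hz.2]
    · rw [div_le_one (by linarith)]
      linarith
  constructor
  · calc (1 / 3 : ℝ) = ∫ _ in (1:ℝ)..2, (1 / 3 : ℝ) := by norm_num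
      _ ≤ gkdDeriv k δ 2 :=
        integral_mono_on one_le_two intervalIntegrable_const hint fun z hz => (hbounds z hz).1
  · calc gkdDeriv k δ 2 ≤ ∫ _ in (1:ℝ)..2, (1 : ℝ) :=
          integral_mono_on one_le_two hint intervalIntegrable_const fun z hz => (hbounds z hz).2
      _ = 1 := by norm_num

theorem neg_one_le_gkd_two (hk : 1 ≤ k) (hδ : 0 < δ) : -1 ≤ gkd k δ 2 := by
  have hmono := monotone_gkdDeriv (k := k) hδ
  have h01 : -1 ≤ ∫ y in (0:ℝ)..1, gkdDeriv k δ y :=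
    calc (-1 : ℝ) = ∫ y in (0:ℝ)..1, log y := by simp [integral_log]
      _ ≤ ∫ y in (0:ℝ)..1, gkdDeriv k δ y :=
        integral_mono_on_of_le_Ioo zero_le_one intervalIntegrable_log' hmono.intervalIntegrable
          fun y hy => log_le_gkdDeriv hk hδ hy.1 hy.2.le
  have h12 : 0 ≤ ∫ y in (1:ℝ)..2, gkdDeriv k δ y := by
    simpa [gkdDeriv_one] using hmono.sub_mul_le_intervalIntegral 1 2
  rw [gkd_eq_integral_gkdDeriv,
    ← integral_add_adjacent_intervals hmono.intervalIntegrable hmono.intervalIntegrable]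
  linarith

end EntropyDensity

theorem stmt_19 :
    ∃ c C : ℝ, 0 < c ∧ 0 < C ∧ ∀ k : ℝ, 1 ≤ k → ∀ δ : ℝ, 0 < δ → δ ≤ 1 →
      ∀ s : ℝ, 0 ≤ s → gkd k δ s ≥ c * s - C := by
  refine ⟨1 / 3, 3, by norm_num, by norm_num, fun k hk δ hδ hδ1 s hs => ?_⟩
  have htangent := gkd_add_sub_mul_le (k := k) hδ 2 s
  have hg2 := neg_one_le_gkd_two hk hδ
  obtain ⟨hslope_lo, hslope_hi⟩ := gkdDeriv_two_mem_Icc hk hδ hδ1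
  nlinarith
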